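/- arXiv:math/9805069 — 2 statements merged into one kernel-verified Lean document; each statement's English description precedes it below -/
import Mathlib

section
/- Let (V, ⟨,⟩) be a Euclidean vector space, G ⊆ SO(V) a connected compact subgroup, and R an algebraic curvature tensor on V with R(x,y) ∈ 𝔤 (the Lie algebra of G) for all x, y ∈ V — i.e., [V, R, G] is a holonomy system. Suppose G acts reducibly with invariant orthogonal decomposition V = V₀ ⊕ V₁ ⊕ ... ⊕ V_k, where G acts trivially on V₀ and irreducibly on each Vᵢ, i ≥ 1. Define Rⁱ(x,y) := prᵢ ∘ (R(x,y)|Vᵢ) for x,y ∈ Vᵢ. Then for all x, y ∈ V one has R(x,y) = Σᵢ Rⁱ(xᵢ, yᵢ), where xᵢ, yᵢ are the Vᵢ-components of x, y. -/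
local notation "⟪" x ", " y "⟫" => @inner ℝ _ _ x y

/-- Let `[V, R, G]` be a holonomy system: `R` an algebraic curvature tensor
whose operators `R x y` lie in the Lie algebra of a compact connected `G ⊆ SO(V)` (so each
`R x y` is skew-symmetric and commutes with the orthogonal projections `p i` onto the
`G`-invariant factors `V i` of an invariant orthogonal decomposition of `V`, with `G`
trivial on `V 0` and irreducible on `V i`, `i ≥ 1`). Then `R` splits:
`R x y z = ∑ i, p i (R (p i x) (p i y) (p i z))`, i.e. `R(x,y) = ∑ Rⁱ(xᵢ,yᵢ)`. -/
theorem stmt8 {V : Type*} [NormedAddCommGroup V] [InnerProductSpace ℝ V]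
    [FiniteDimensional ℝ V] {k : ℕ}
    (Vs : Fin (k + 1) → Submodule ℝ V)
    (p : Fin (k + 1) → V →ₗ[ℝ] V)
    (hrange : ∀ i v, p i v ∈ Vs i)
    (hidem : ∀ i, ∀ v ∈ Vs i, p i v = v)
    (hsymm : ∀ i x y, ⟪p i x, y⟫ = ⟪x, p i y⟫)
    (hsum : ∀ v : V, ∑ i, p i v = v)
    (hdisj : ∀ i j, i ≠ j → ∀ v, p i (p j v) = 0)
    (R : V →ₗ[ℝ] V →ₗ[ℝ] V →ₗ[ℝ] V)
    (hskew1 : ∀ x y z : V, R x y z = - R y x z)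
    (hskew2 : ∀ x y z w : V, ⟪R x y z, w⟫ = - ⟪R x y w, z⟫)
    (hpair : ∀ x y z w : V, ⟪R x y z, w⟫ = ⟪R z w x, y⟫)
    (hbianchi : ∀ x y z : V, R x y z + R y z x + R z x y = 0)
    -- `R x y ∈ 𝔤`: each curvature operator preserves every `G`-invariant factor
    (hg : ∀ (x y z : V) (i : Fin (k + 1)), p i (R x y z) = R x y (p i z)) :
    ∀ x y z : V, R x y z = ∑ i, p i (R (p i x) (p i y) (p i z)) := by
  -- `p i` is idempotent on its image
  have hpp : ∀ i v, p i (p i v) = p i v := fun i v => hidem i _ (hrange i v)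
  -- Key lemma: if the first argument lies in `Vs i`, the second may be projected.
  have L : ∀ (i : Fin (k + 1)) (u x z : V),
      R (p i u) x z = R (p i u) (p i x) z := by
    intro i u x z
    apply ext_inner_right ℝ
    intro w
    calc ⟪R (p i u) x z, w⟫ = ⟪R z w (p i u), x⟫ := hpair _ _ _ _
      _ = ⟪p i (R z w (p i u)), x⟫ := by rw [hg, hpp]
      _ = ⟪R z w (p i u), p i x⟫ := hsymm _ _ _
      _ = ⟪R (p i u) (p i x) z, w⟫ := (hpair _ _ _ _).symm
  -- Cross terms vanish.
  have Z : ∀ (i j : Fin (k + 1)), i ≠ j → ∀ u v a : V,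
      R (p i u) (p i v) (p j a) = 0 := by
    intro i j hij u v a
    apply ext_inner_right ℝ
    intro w
    have h1 : R (p j (p j a)) (p j w) (p i u) = 0 := by
      have hb := hbianchi (p j (p j a)) (p j w) (p i u)
      have h2 : R (p j w) (p i u) (p j (p j a)) = 0 := by
        have := L j w (p i u) (p j (p j a))
        rw [this, hdisj j i (Ne.symm hij)]
        simp
      have h3 : R (p i u) (p j (p j a)) (p j w) = 0 := by
        have := L i u (p j (p j a)) (p j w)
        rw [this, hdisj i j hij]
        simp
      rw [h2, h3, add_zero, add_zero] at hb
      exact hb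
    calc ⟪R (p i u) (p i v) (p j a), w⟫ = ⟪R (p j a) w (p i u), p i v⟫ := hpair _ _ _ _
      _ = ⟪R (p j a) (p j w) (p i u), p i v⟫ := by
          conv_lhs => rw [show p j a = p j (p j a) from (hpp j a).symm, L j]
          rw [hpp]
      _ = ⟪(0 : V), w⟫ := by
          rw [show p j a = p j (p j a) from (hpp j a).symm, h1]
          simp
  intro x y z
  -- expand x over the projections
  conv_lhs => rw [← hsum x]
  rw [map_sum, LinearMap.sum_apply, LinearMap.sum_apply]
  refine Finset.sum_congr rfl fun i _ => ?_
  rw [L i x y z]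
  conv_lhs => rw [← hsum z, map_sum]
  rw [Finset.sum_eq_single i]
  · rw [hg, hpp]
  · intro j _ hji
    exact Z i j (Ne.symm hji) x y z
  · simp
end

section
/- Let V be a finite-dimensional real inner product space and R an algebraic curvature tensor on V all of whose sectional curvatures are nonnegative (or all nonpositive). If W ⊆ V is a nonzero subspace on which R is not identically zero (i.e., there exist x,y,z,w ∈ W with ⟨R(x,y)z,w⟩ ≠ 0), then the scalar curvature of R restricted to W is nonzero: for any orthonormal basis e₁,...,e_r of W, Σ_{h,k} ⟨R(e_h, e_k) e_h, e_k⟩ ≠ 0. -/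
local notation "⟪" x ", " y "⟫" => @inner ℝ _ _ x y

/-- Let `R` be an algebraic curvature tensor on a real inner product space
all of whose sectional curvatures are nonnegative (or all nonpositive), satisfying the
symmetric-space property `⟪R η a η, a⟫ = 0 → R η a = 0`. If `W` is a subspace, spanned by an
orthonormal family `e₁, …, e_r`, on which `R` does not vanish identically, then the scalar
curvature of `R` restricted to `W` is nonzero: `∑_{h,k} ⟪R (e h) (e k) (e h), e k⟫ ≠ 0`. -/
theorem stmt9 {V : Type*} [NormedAddCommGroup V] [InnerProductSpace ℝ V]
    [FiniteDimensional ℝ V]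
    (R : V →ₗ[ℝ] V →ₗ[ℝ] V →ₗ[ℝ] V)
    (hskew1 : ∀ x y z : V, R x y z = - R y x z)
    (hskew2 : ∀ x y z w : V, ⟪R x y z, w⟫ = - ⟪R x y w, z⟫)
    (hpair : ∀ x y z w : V, ⟪R x y z, w⟫ = ⟪R z w x, y⟫)
    (hbianchi : ∀ x y z : V, R x y z + R y z x + R z x y = 0)
    (hsign : (∀ x y : V, (0:ℝ) ≤ ⟪R x y y, x⟫) ∨ (∀ x y : V, ⟪R x y y, x⟫ ≤ (0:ℝ)))
    (hdichotomy : ∀ η a : V, ⟪R η a η, a⟫ = (0:ℝ) → R η a = 0)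
    (W : Submodule ℝ V) {r : ℕ} (e : Fin r → V)
    (horthonormal : Orthonormal ℝ e)
    (hspan : W = Submodule.span ℝ (Set.range e))
    (hnontrivial : ∃ x ∈ W, ∃ y ∈ W, ∃ z ∈ W, ∃ w ∈ W, ⟪R x y z, w⟫ ≠ (0:ℝ)) :
    (∑ h : Fin r, ∑ k : Fin r, ⟪R (e h) (e k) (e h), e k⟫) ≠ (0:ℝ) := by

  intro hsum
  -- each diagonal term vanishes
  have hterm : ∀ h k : Fin r, ⟪R (e h) (e k) (e h), e k⟫ = (0:ℝ) := by
    have hsum' : ∑ p : Fin r × Fin r, ⟪R (e p.1) (e p.2) (e p.1), e p.2⟫ = 0 := by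
      rw [Fintype.sum_prod_type]
      exact hsum
    rcases hsign with hpos | hneg
    · have hle : ∀ p : Fin r × Fin r, p ∈ Finset.univ →
          ⟪R (e p.1) (e p.2) (e p.1), e p.2⟫ ≤ 0 := by
        intro p _
        have := hpos (e p.1) (e p.2)
        have h2 := hskew2 (e p.1) (e p.2) (e p.1) (e p.2)
        linarith
      intro h k
      have := (Finset.sum_eq_zero_iff_of_nonpos hle).mp hsum' (h, k) (Finset.mem_univ _)
      exact this
    · have hle : ∀ p : Fin r × Fin r, p ∈ Finset.univ →
          (0:ℝ) ≤ ⟪R (e p.1) (e p.2) (e p.1), e p.2⟫ := by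
        intro p _
        have := hneg (e p.1) (e p.2)
        have h2 := hskew2 (e p.1) (e p.2) (e p.1) (e p.2)
        linarith
      intro h k
      exact (Finset.sum_eq_zero_iff_of_nonneg hle).mp hsum' (h, k) (Finset.mem_univ _)
  have hRe : ∀ h k : Fin r, R (e h) (e k) = 0 := fun h k =>
    hdichotomy (e h) (e k) (hterm h k)
  -- R vanishes on W
  have hstep1 : ∀ h : Fin r, ∀ y ∈ W, R (e h) y = 0 := by
    intro h y hy
    have : W ≤ LinearMap.ker (R (e h)) := by
      rw [hspan, Submodule.span_le]
      rintro _ ⟨k, rfl⟩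
      exact hRe h k
    exact this hy
  have hstep2 : ∀ x ∈ W, ∀ y ∈ W, R x y = 0 := by
    intro x hx y hy
    have : W ≤ LinearMap.ker (R.flip y) := by
      rw [hspan, Submodule.span_le]
      rintro _ ⟨h, rfl⟩
      show R (e h) y = 0
      exact hstep1 h y hy
    exact this hx
  obtain ⟨x, hx, y, hy, z, hz, w, hw, hne⟩ := hnontrivial
  apply hne
  rw [hstep2 x hx y hy]
  simp
end
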